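/- arXiv:1406.5082 — 3 statements merged into one kernel-verified Lean document; each statement's English description precedes it below -/
import Mathlib

section
/- For any labelling of the vertices of the grid graph on {0,...,m} × {0,...,n} by colors {1,2,3,4} such that the corners (0,0),(m,0),(m,n),(0,n) receive colors 1,2,3,4 respectively, vertices on the bottom edge receive only colors 1 or 2, on the right edge only 2 or 3, on the top edge only 3 or 4, and on the left edge only 4 or 1, either some unit square has its four vertices colored with all four colors, or some grid edge (horizontal or vertical segment of length 1) has endpoints colored {1,3} or {2,4}. -/
/-- Two endpoint colors forming a "diagonal" pair `{1,3}` or `{2,4}`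
(here encoded as `{0,2}` or `{1,3}` in `Fin 4`). -/
def DiagPair (a b : Fin 4) : Prop :=
  (a = 0 ∧ b = 2) ∨ (a = 2 ∧ b = 0) ∨ (a = 1 ∧ b = 3) ∨ (a = 3 ∧ b = 1)

/-- Indicator (in `ZMod 2`) that an edge has endpoint colors `{0,1}`. -/
def eIdx (a b : Fin 4) : ZMod 2 :=
  if (a = 0 ∧ b = 1) ∨ (a = 1 ∧ b = 0) then 1 else 0

/-- Potential function on colors. -/
def gIdx (a : Fin 4) : ZMod 2 := if a = 1 then 1 else 0

def xe (c : ℕ × ℕ → Fin 4) (i j : ℕ) : ZMod 2 := eIdx (c (i, j)) (c (i + 1, j))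

def ye (c : ℕ × ℕ → Fin 4) (i j : ℕ) : ZMod 2 := eIdx (c (i, j)) (c (i, j + 1))

set_option synthInstance.maxSize 2000 in
set_option maxHeartbeats 1000000 in
lemma square_key : ∀ a b r s : Fin 4,
    ¬DiagPair a b → ¬DiagPair s r → ¬DiagPair a s → ¬DiagPair b r →
    ({a, b, r, s} : Finset (Fin 4)) ≠ Finset.univ →
    eIdx a b + eIdx s r + eIdx a s + eIdx b r = 0 := by
  simp only [DiagPair, eIdx]
  decide

lemma tele (f : ℕ → ZMod 2) (n : ℕ) :
    ∑ j ∈ Finset.range n, (f j + f (j + 1)) = f 0 + f n := by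
  induction n with
  | zero => rw [Finset.sum_range_zero]; exact (CharTwo.add_self_eq_zero _).symm
  | succ k ih =>
      rw [Finset.sum_range_succ, ih]
      linear_combination CharTwo.add_self_eq_zero (f k)

/-- **Theorem A (Ky Fan).** For any labelling of the vertices of the grid
`{0,…,m} × {0,…,n}` by four colors (colors `1,2,3,4` encoded as
`0,1,2,3 : Fin 4`) satisfying the Sperner boundary conditions, either some
unit square has all four colors on its vertices, or some grid edge has its
endpoints colored with a diagonal pair `{1,3}` or `{2,4}`. -/
theorem sperner_pile2 (m n : ℕ) (hm : 1 ≤ m) (hn : 1 ≤ n)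
    (c : ℕ × ℕ → Fin 4)
    (hA : c (0, 0) = 0) (hB : c (m, 0) = 1) (hC : c (m, n) = 2) (hD : c (0, n) = 3)
    (hbottom : ∀ i ≤ m, c (i, 0) = 0 ∨ c (i, 0) = 1)
    (hright : ∀ j ≤ n, c (m, j) = 1 ∨ c (m, j) = 2)
    (htop : ∀ i ≤ m, c (i, n) = 2 ∨ c (i, n) = 3)
    (hleft : ∀ j ≤ n, c (0, j) = 3 ∨ c (0, j) = 0) :
    (∃ i < m, ∃ j < n,
        ({c (i, j), c (i + 1, j), c (i + 1, j + 1), c (i, j + 1)} : Finset (Fin 4))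
          = Finset.univ) ∨
    (∃ i j, (i < m ∧ j ≤ n ∧ DiagPair (c (i, j)) (c (i + 1, j))) ∨
            (i ≤ m ∧ j < n ∧ DiagPair (c (i, j)) (c (i, j + 1)))) := by
  by_contra hcon
  push_neg at hcon
  obtain ⟨hsq, hed⟩ := hcon
  -- per-square vanishing
  have key : ∀ i ∈ Finset.range m, ∀ j ∈ Finset.range n,
      xe c i j + xe c i (j + 1) + ye c i j + ye c (i + 1) j = 0 := by
    intro i hi j hj
    rw [Finset.mem_range] at hi hj
    exact square_key _ _ _ _
      ((hed i j).1 hi hj.le)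
      ((hed i (j + 1)).1 hi hj)
      ((hed i j).2 hi.le hj)
      ((hed (i + 1) j).2 hi hj)
      (hsq i hi j hj)
  have hS0 : ∑ i ∈ Finset.range m, ∑ j ∈ Finset.range n,
      (xe c i j + xe c i (j + 1) + ye c i j + ye c (i + 1) j) = 0 :=
    Finset.sum_eq_zero fun i hi => Finset.sum_eq_zero (key i hi)
  -- boundary vanishing
  have hxtop : ∀ i < m, xe c i n = 0 := by
    intro i hi
    rcases htop i hi.le with h1 | h1 <;> rcases htop (i + 1) hi with h2 | h2 <;>
      (unfold xe eIdx; rw [h1, h2]; decide)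
  have hyleft : ∀ j < n, ye c 0 j = 0 := by
    intro j hj
    rcases hleft j hj.le with h1 | h1 <;> rcases hleft (j + 1) hj with h2 | h2 <;>
      (unfold ye eIdx; rw [h1, h2]; decide)
  have hyright : ∀ j < n, ye c m j = 0 := by
    intro j hj
    rcases hright j hj.le with h1 | h1 <;> rcases hright (j + 1) hj with h2 | h2 <;>
      (unfold ye eIdx; rw [h1, h2]; decide)
  -- bottom row: odd number of {0,1} edges
  have hxbot : ∀ i < m, xe c i 0 = gIdx (c (i, 0)) + gIdx (c (i + 1, 0)) := by
    intro i hi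
    rcases hbottom i hi.le with h1 | h1 <;> rcases hbottom (i + 1) hi with h2 | h2 <;>
      (unfold xe eIdx gIdx; rw [h1, h2]; decide)
  have hbotsum : ∑ i ∈ Finset.range m, xe c i 0 = 1 := by
    have h1 : ∑ i ∈ Finset.range m, xe c i 0
        = ∑ i ∈ Finset.range m, (gIdx (c (i, 0)) + gIdx (c (i + 1, 0))) :=
      Finset.sum_congr rfl fun i hi => hxbot i (Finset.mem_range.mp hi)
    have h2 : ∑ i ∈ Finset.range m, (gIdx (c (i, 0)) + gIdx (c (i + 1, 0)))
        = gIdx (c (0, 0)) + gIdx (c (m, 0)) := tele (fun i => gIdx (c (i, 0))) m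
    rw [h1, h2, hA, hB]
    decide
  -- split the double sum
  have hsplit : ∑ i ∈ Finset.range m, ∑ j ∈ Finset.range n,
      (xe c i j + xe c i (j + 1) + ye c i j + ye c (i + 1) j)
      = (∑ i ∈ Finset.range m, ∑ j ∈ Finset.range n, (xe c i j + xe c i (j + 1)))
      + (∑ i ∈ Finset.range m, ∑ j ∈ Finset.range n, (ye c i j + ye c (i + 1) j)) := by
    rw [← Finset.sum_add_distrib]
    refine Finset.sum_congr rfl fun i _ => ?_
    rw [← Finset.sum_add_distrib]
    exact Finset.sum_congr rfl fun j _ => by ring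
  have hxs : ∑ i ∈ Finset.range m, ∑ j ∈ Finset.range n, (xe c i j + xe c i (j + 1))
      = ∑ i ∈ Finset.range m, xe c i 0 := by
    refine Finset.sum_congr rfl fun i hi => ?_
    have ht : ∑ j ∈ Finset.range n, (xe c i j + xe c i (j + 1)) = xe c i 0 + xe c i n :=
      tele (fun j => xe c i j) n
    rw [ht, hxtop i (Finset.mem_range.mp hi), add_zero]
  have hys : ∑ i ∈ Finset.range m, ∑ j ∈ Finset.range n, (ye c i j + ye c (i + 1) j)
      = 0 := by
    rw [Finset.sum_comm]
    refine Finset.sum_eq_zero fun j hj => ?_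
    have ht : ∑ i ∈ Finset.range m, (ye c i j + ye c (i + 1) j) = ye c 0 j + ye c m j :=
      tele (fun i => ye c i j) m
    rw [ht, hyleft j (Finset.mem_range.mp hj), hyright j (Finset.mem_range.mp hj), add_zero]
  rw [hsplit, hxs, hys, add_zero, hbotsum] at hS0
  exact one_ne_zero hS0
end

section
/- Let v_1,...,v_m be points cyclically arranged on a circle with a labelling L: {v_1,...,v_m} → {1,2,3,4} such that no two cyclically adjacent vertices are labelled {1,3} or {2,4}. Define deg([a,b],L) as the number of cyclically consecutive pairs (v_k, v_{k+1}) with labels (a,b) minus the number with labels (b,a). Then deg([1,2],L) = deg([2,3],L) = deg([3,4],L) = deg([4,1],L). -/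
/-!
Read the labelling as a closed walk on the 4-cycle `1 - 2 - 3 - 4 - 1`: the step `k → k + 1`
traverses the edge `{L k, L (k + 1)}`, and `cycDeg L a b` is the net number of traversals of
`a → b`. A closed walk enters every label as often as it leaves it, so the net flow out of each
label vanishes. Since the diagonals are never traversed, the net flow out of `b` is
`cycDeg L b c - cycDeg L a b` for its neighbours `a → b → c`, and the degrees agree.
-/

open Finset

/-- `cycDeg L a b` is the number of cyclically consecutive pairs
`(v k, v (k+1))` labelled `(a, b)` minus the number labelled `(b, a)`. -/
def cycDeg {m : ℕ} [NeZero m] (L : Fin m → Fin 4) (a b : Fin 4) : ℤ :=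
  ((Finset.univ.filter fun k : Fin m => L k = a ∧ L (k + 1) = b).card : ℤ) -
  ((Finset.univ.filter fun k : Fin m => L k = b ∧ L (k + 1) = a).card : ℤ)

section Counting

variable {ι α : Type*} [Fintype ι] [Fintype α] [DecidableEq α]

lemma sum_card_filter_eq_and_eq (f g : ι → α) (a : α) :
    ∑ b, #{k | f k = a ∧ g k = b} = #{k | f k = a} := by
  rw [card_eq_sum_card_fiberwise (f := g) (t := univ) fun _ _ => mem_univ _]
  simp only [filter_filter]

lemma sum_card_filter_eq_and_eq' (f g : ι → α) (a : α) :
    ∑ b, #{k | f k = b ∧ g k = a} = #{k | g k = a} := by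
  simp only [and_comm (a := f _ = _), sum_card_filter_eq_and_eq]

lemma card_filter_comp_equiv (e : ι ≃ ι) (p : ι → Prop) [DecidablePred p] :
    #{k | p (e k)} = #{k | p k} :=
  card_equiv e fun _ => by simp only [mem_filter, mem_univ, true_and]

end Counting

section CycDeg

variable {m : ℕ} [NeZero m] (L : Fin m → Fin 4)

lemma cycDeg_swap (a b : Fin 4) : cycDeg L b a = -cycDeg L a b :=
  (neg_sub _ _).symm

lemma cycDeg_self (a : Fin 4) : cycDeg L a a = 0 :=
  sub_self _

lemma cycDeg_eq_zero_of_not_adjacent {a b : Fin 4}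
    (h : ∀ k, ¬(L k = a ∧ L (k + 1) = b) ∧ ¬(L k = b ∧ L (k + 1) = a)) :
    cycDeg L a b = 0 := by
  simp [cycDeg, filter_eq_empty_iff.2 fun k _ => (h k).1, filter_eq_empty_iff.2 fun k _ => (h k).2]

lemma sum_cycDeg_eq_zero (a : Fin 4) : ∑ b, cycDeg L a b = 0 := by
  have hshift : #{k | L (k + 1) = a} = #{k | L k = a} :=
    card_filter_comp_equiv (Equiv.addRight 1) (fun k => L k = a)
  simp only [cycDeg, sum_sub_distrib, ← Nat.cast_sum, sum_card_filter_eq_and_eq,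
    sum_card_filter_eq_and_eq' L (fun k => L (k + 1)), hshift, sub_self]

end CycDeg

/-- For a cyclic labelling by `{1,2,3,4}` (encoded as `Fin 4`) with no two
cyclically adjacent vertices labelled `{1,3}` or `{2,4}`, the four degrees
`deg([1,2],L) = deg([2,3],L) = deg([3,4],L) = deg([4,1],L)` coincide. -/
theorem cycDeg_eq {m : ℕ} [NeZero m] (L : Fin m → Fin 4)
    (hdiag : ∀ k : Fin m,
      ¬((L k = 0 ∧ L (k + 1) = 2) ∨ (L k = 2 ∧ L (k + 1) = 0) ∨
        (L k = 1 ∧ L (k + 1) = 3) ∨ (L k = 3 ∧ L (k + 1) = 1))) :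
    cycDeg L 0 1 = cycDeg L 1 2 ∧ cycDeg L 1 2 = cycDeg L 2 3 ∧
      cycDeg L 2 3 = cycDeg L 3 0 := by
  have h02 : cycDeg L 0 2 = 0 :=
    cycDeg_eq_zero_of_not_adjacent L fun k => by have := hdiag k; tauto
  have h13 : cycDeg L 1 3 = 0 :=
    cycDeg_eq_zero_of_not_adjacent L fun k => by have := hdiag k; tauto
  have flow1 := sum_cycDeg_eq_zero L 1
  have flow2 := sum_cycDeg_eq_zero L 2
  have flow3 := sum_cycDeg_eq_zero L 3
  simp only [Fin.sum_univ_four, cycDeg_self] at flow1 flow2 flow3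
  refine ⟨?_, ?_, ?_⟩ <;>
    linarith [cycDeg_swap L 0 1, cycDeg_swap L 0 2, cycDeg_swap L 1 2, cycDeg_swap L 1 3,
      cycDeg_swap L 2 3]
end

section
/- Let L be a map from the vertex cycle of a polygon boundary to {1,2,3,4} with no adjacent pair labelled {1,3} or {2,4}, and suppose all four labels 1,2,3,4 occur in cyclic order exactly once each with arbitrary repetitions allowed within blocks (i.e., L is induced by a Sperner labelling of the boundary of a rectangle with corners labelled 1,2,3,4). Then deg([1,2],L) = 1. -/
/-- For a Sperner labelling of the boundary cycle of a rectangle — corners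
labelled `1,2,3,4` (encoded `0,1,2,3 : Fin 4`) in cyclic order at positions
`i₁ < i₂ < i₃ < i₄`, and each vertex strictly inside a side labelled with one
of the two labels of that side's corners — we have `deg([1,2],L) = 1`. -/
theorem sperner_boundary_deg_one (m : ℕ) [NeZero m] (L : Fin m → Fin 4)
    (i₁ i₂ i₃ i₄ : Fin m)
    (h12 : i₁.val < i₂.val) (h23 : i₂.val < i₃.val) (h34 : i₃.val < i₄.val)
    (hc1 : L i₁ = 0) (hc2 : L i₂ = 1) (hc3 : L i₃ = 2) (hc4 : L i₄ = 3)
    (hside1 : ∀ k : Fin m, i₁.val < k.val → k.val < i₂.val → L k = 0 ∨ L k = 1)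
    (hside2 : ∀ k : Fin m, i₂.val < k.val → k.val < i₃.val → L k = 1 ∨ L k = 2)
    (hside3 : ∀ k : Fin m, i₃.val < k.val → k.val < i₄.val → L k = 2 ∨ L k = 3)
    (hside4 : ∀ k : Fin m, (k.val < i₁.val ∨ i₄.val < k.val) → L k = 3 ∨ L k = 0) :
    cycDeg L 0 1 = 1 := by
  classical
  have hm : 0 < m := Nat.pos_of_ne_zero (NeZero.ne m)
  -- positions where label 0 can occur
  have pos0 : ∀ k : Fin m, L k = 0 → k.val < i₂.val ∨ i₄.val < k.val := by
    intro k hk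
    by_contra hcon
    push_neg at hcon
    obtain ⟨h2k, hk4⟩ := hcon
    rcases lt_trichotomy k.val i₃.val with h3 | h3 | h3
    · rcases Nat.eq_or_lt_of_le h2k with he | hl
      · rw [Fin.ext he.symm, hc2] at hk; exact absurd hk (by decide)
      · rcases hside2 k hl h3 with h | h <;> rw [h] at hk <;> exact absurd hk (by decide)
    · rw [Fin.ext h3, hc3] at hk; exact absurd hk (by decide)
    · rcases Nat.eq_or_lt_of_le hk4 with he | hl
      · rw [Fin.ext he, hc4] at hk; exact absurd hk (by decide)
      · rcases hside3 k h3 hl with h | h <;> rw [h] at hk <;> exact absurd hk (by decide)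
  -- positions where label 1 can occur
  have pos1 : ∀ k : Fin m, L k = 1 → i₁.val < k.val ∧ k.val < i₃.val := by
    intro k hk
    constructor
    · by_contra h
      push_neg at h
      rcases Nat.eq_or_lt_of_le h with he | hl
      · rw [Fin.ext he, hc1] at hk; exact absurd hk (by decide)
      · rcases hside4 k (Or.inl hl) with h' | h' <;> rw [h'] at hk <;>
          exact absurd hk (by decide)
    · by_contra h
      push_neg at h
      rcases Nat.eq_or_lt_of_le h with he | hl
      · rw [Fin.ext he.symm, hc3] at hk; exact absurd hk (by decide)
      · rcases lt_trichotomy k.val i₄.val with h4 | h4 | h4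
        · rcases hside3 k hl h4 with h' | h' <;> rw [h'] at hk <;>
            exact absurd hk (by decide)
        · rw [Fin.ext h4, hc4] at hk; exact absurd hk (by decide)
        · rcases hside4 k (Or.inr h4) with h' | h' <;> rw [h'] at hk <;>
            exact absurd hk (by decide)
  -- labels on the segment [i₁, i₂] are 0 or 1
  have mid : ∀ (n : ℕ) (h : n < m), i₁.val ≤ n → n ≤ i₂.val →
      L ⟨n, h⟩ = 0 ∨ L ⟨n, h⟩ = 1 := by
    intro n h h1 h2
    rcases Nat.eq_or_lt_of_le h1 with he | hl
    · left; rw [show (⟨n, h⟩ : Fin m) = i₁ from Fin.ext he.symm]; exact hc1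
    · rcases Nat.eq_or_lt_of_le h2 with he | hl2
      · right; rw [show (⟨n, h⟩ : Fin m) = i₂ from Fin.ext he]; exact hc2
      · exact hside1 ⟨n, h⟩ hl hl2
  -- the cyclic successor
  have key : ∀ k : Fin m, ((k + 1 : Fin m) : ℕ) = (k.val + 1) % m := by
    intro k
    rw [Fin.add_def]
    simp [Fin.val_one', Nat.add_mod, Nat.mod_eq_of_lt k.isLt]
  set F : ℕ → ℤ := fun n => if L ⟨n % m, Nat.mod_lt n hm⟩ = 1 then 1 else 0 with hF
  set g : ℕ → ℤ := fun n =>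
    (if L ⟨n % m, Nat.mod_lt n hm⟩ = 0 ∧ L ⟨(n + 1) % m, Nat.mod_lt _ hm⟩ = 1
      then 1 else 0)
    - (if L ⟨n % m, Nat.mod_lt n hm⟩ = 1 ∧ L ⟨(n + 1) % m, Nat.mod_lt _ hm⟩ = 0
      then 1 else 0) with hg
  have hgk : ∀ k : Fin m, g k.val =
      (if L k = 0 ∧ L (k + 1) = 1 then (1 : ℤ) else 0)
      - (if L k = 1 ∧ L (k + 1) = 0 then 1 else 0) := by
    intro k
    have e1 : (⟨k.val % m, Nat.mod_lt _ hm⟩ : Fin m) = k :=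
      Fin.ext (Nat.mod_eq_of_lt k.isLt)
    have e2 : (⟨(k.val + 1) % m, Nat.mod_lt _ hm⟩ : Fin m) = k + 1 :=
      Fin.ext (key k).symm
    simp only [hg, e1, e2]
  have hA : cycDeg L 0 1 = ∑ n ∈ Finset.range m, g n := by
    rw [← Fin.sum_univ_eq_sum_range g]
    unfold cycDeg
    rw [Finset.card_filter, Finset.card_filter]
    push_cast
    rw [← Finset.sum_sub_distrib]
    exact Finset.sum_congr rfl fun k _ => (hgk k).symm
  have hsub : Finset.Ico i₁.val i₂.val ⊆ Finset.range m := by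
    intro n hn
    rw [Finset.mem_Ico] at hn
    exact Finset.mem_range.mpr (hn.2.trans i₂.isLt)
  have hvanish : ∀ n ∈ Finset.range m, n ∉ Finset.Ico i₁.val i₂.val → g n = 0 := by
    intro n hn hni
    rw [Finset.mem_range] at hn
    rw [Finset.mem_Ico] at hni
    push_neg at hni
    have hnn : n % m = n := Nat.mod_eq_of_lt hn
    simp only [hg]
    rw [if_neg, if_neg, sub_zero]
    · rintro ⟨ha, hb⟩
      have p1 := pos1 _ ha
      have p0 := pos0 _ hb
      simp only [hnn] at ha p1 p0 ⊢
      rcases Nat.lt_or_ge (n + 1) m with h | h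
      · rw [Nat.mod_eq_of_lt h] at p0
        omega
      · have : n + 1 = m := by omega
        rw [this, Nat.mod_self] at p0
        omega
    · rintro ⟨ha, hb⟩
      have p0 := pos0 _ ha
      have p1 := pos1 _ hb
      simp only [hnn] at ha p0 p1 ⊢
      rcases Nat.lt_or_ge (n + 1) m with h | h
      · rw [Nat.mod_eq_of_lt h] at p1
        omega
      · have : n + 1 = m := by omega
        rw [this, Nat.mod_self] at p1
        omega
  have hC : ∀ n ∈ Finset.Ico i₁.val i₂.val, g n = F (n + 1) - F n := by
    intro n hn
    rw [Finset.mem_Ico] at hn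
    have hnm : n < m := (hn.2.trans i₂.isLt)
    have hn1m : n + 1 < m := Nat.lt_of_le_of_lt hn.2 i₂.isLt
    have hnn : n % m = n := Nat.mod_eq_of_lt hnm
    have hnn1 : (n + 1) % m = n + 1 := Nat.mod_eq_of_lt hn1m
    have e1 : (⟨n % m, Nat.mod_lt n hm⟩ : Fin m) = ⟨n, hnm⟩ := Fin.ext hnn
    have e2 : (⟨(n + 1) % m, Nat.mod_lt _ hm⟩ : Fin m) = ⟨n + 1, hn1m⟩ := Fin.ext hnn1
    have la := mid n hnm hn.1 (le_of_lt hn.2)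
    have lb := mid (n + 1) hn1m (by omega) hn.2
    simp only [hg, hF, e1, e2]
    rcases la with la | la <;> rcases lb with lb | lb <;> simp [la, lb]
  have hD : ∑ n ∈ Finset.Ico i₁.val i₂.val, (F (n + 1) - F n) = F i₂.val - F i₁.val := by
    rw [Finset.sum_Ico_eq_sub _ (le_of_lt h12), Finset.sum_range_sub, Finset.sum_range_sub]
    ring
  have hF2 : F i₂.val = 1 := by
    have e : (⟨i₂.val % m, Nat.mod_lt _ hm⟩ : Fin m) = i₂ :=
      Fin.ext (Nat.mod_eq_of_lt i₂.isLt)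
    simp [hF, e, hc2]
  have hF1 : F i₁.val = 0 := by
    have e : (⟨i₁.val % m, Nat.mod_lt _ hm⟩ : Fin m) = i₁ :=
      Fin.ext (Nat.mod_eq_of_lt i₁.isLt)
    simp [hF, e, hc1]
  rw [hA, ← Finset.sum_subset hsub hvanish, Finset.sum_congr rfl hC, hD, hF2, hF1]
  ring
end
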